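/- Let Q be a strongly locally finite quiver, Σ₁ a top-finite full subquiver and Σ₂ a socle-finite full subquiver of Q. Then there are only finitely many arrows of Q starting at a vertex of Σ₁ and ending at a vertex of Σ₂. -/
import Mathlib


open Quiver

universe u v

/-- The quiver is locally finite: each vertex meets only finitely many arrows. -/
def QuiverLocallyFinite (V : Type u) [Quiver.{v+1} V] : Prop :=
  (∀ x y : V, Finite (x ⟶ y)) ∧
    (∀ x : V, {y : V | Nonempty (x ⟶ y)}.Finite) ∧
    (∀ x : V, {y : V | Nonempty (y ⟶ x)}.Finite)

/-- The quiver is interval-finite: finitely many paths between any two vertices. -/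
def IntervalFinite (V : Type u) [Quiver.{v+1} V] : Prop :=
  ∀ x y : V, Finite (Quiver.Path x y)

/-- `y` is reachable from `x` by a path all of whose vertices lie in `S`. -/
def ReachIn {V : Type u} [Quiver.{v+1} V] (S : Set V) (x y : V) : Prop :=
  Relation.ReflTransGen (fun a b => a ∈ S ∧ b ∈ S ∧ Nonempty (a ⟶ b)) x y

/-- `x` is a source vertex of the full subquiver on `S`. -/
def IsSourceIn {V : Type u} [Quiver.{v+1} V] (S : Set V) (x : V) : Prop :=
  x ∈ S ∧ ∀ y ∈ S, IsEmpty (y ⟶ x)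

/-- `x` is a sink vertex of the full subquiver on `S`. -/
def IsSinkIn {V : Type u} [Quiver.{v+1} V] (S : Set V) (x : V) : Prop :=
  x ∈ S ∧ ∀ y ∈ S, IsEmpty (x ⟶ y)

/-- The full subquiver on `S` is top-finite: it has finitely many sources and every
vertex of `S` is a successor (within `S`) of one of them. -/
def TopFinite {V : Type u} [Quiver.{v+1} V] (S : Set V) : Prop :=
  {x | IsSourceIn S x}.Finite ∧ ∀ x ∈ S, ∃ s, IsSourceIn S s ∧ ReachIn S s x

/-- The full subquiver on `S` is socle-finite: it has finitely many sinks and every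
vertex of `S` is a predecessor (within `S`) of one of them. -/
def SocleFinite {V : Type u} [Quiver.{v+1} V] (S : Set V) : Prop :=
  {x | IsSinkIn S x}.Finite ∧ ∀ x ∈ S, ∃ s, IsSinkIn S s ∧ ReachIn S x s

namespace Aux

open Quiver

variable {V : Type u} [Quiver.{v+1} V]

/-- Vertices appearing on a path. -/
def pathVerts : ∀ {a b : V}, Quiver.Path a b → Set V
  | a, _, Quiver.Path.nil => {a}
  | _, b, Quiver.Path.cons p _ => insert b (pathVerts p)

@[simp] theorem pathVerts_nil {a : V} : pathVerts (Quiver.Path.nil : Quiver.Path a a) = {a} := by simp [pathVerts]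

@[simp] theorem pathVerts_cons {a b c : V} (p : Quiver.Path a b) (e : b ⟶ c) :
    pathVerts (p.cons e) = insert c (pathVerts p) := by simp [pathVerts]

theorem pathVerts_finite : ∀ {a b : V} (p : Quiver.Path a b), (pathVerts p).Finite := by
  intro a b p
  induction p with
  | nil => rw [pathVerts_nil]; exact Set.finite_singleton _
  | cons p e ih => rw [pathVerts_cons]; exact ih.insert _

theorem mem_pathVerts_self {a b : V} (p : Quiver.Path a b) : b ∈ pathVerts p := by
  cases p with
  | nil => rw [pathVerts_nil]; exact rfl
  | cons p e => rw [pathVerts_cons]; exact Set.mem_insert _ _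

theorem pathVerts_comp_subset {a b c : V} (p : Quiver.Path a b) (q : Quiver.Path b c) :
    pathVerts p ⊆ pathVerts (p.comp q) := by
  induction q with
  | nil => simp [Quiver.Path.comp_nil]
  | cons q e ih =>
      rw [Quiver.Path.comp_cons, pathVerts_cons]
      exact ih.trans (Set.subset_insert _ _)

theorem reachIn_path {S : Set V} {a b : V} (h : ReachIn S a b) : Nonempty (Quiver.Path a b) := by
  induction h with
  | refl => exact ⟨Quiver.Path.nil⟩
  | tail _ hbc ih =>
      obtain ⟨p⟩ := ih
      obtain ⟨f⟩ := hbc.2.2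
      exact ⟨p.cons f⟩

end Aux


/-- In a strongly locally finite quiver, there are only finitely many arrows from a
top-finite full subquiver to a socle-finite full subquiver. -/
theorem finitely_many_arrows_top_to_socle {V : Type u} [Quiver.{v+1} V]
    (hlf : QuiverLocallyFinite V) (hif : IntervalFinite V)
    (S₁ S₂ : Set V) (h₁ : TopFinite S₁) (h₂ : SocleFinite S₂) :
    {e : (x : V) × (y : V) × (x ⟶ y) | e.1 ∈ S₁ ∧ e.2.1 ∈ S₂}.Finite := by
  classical
  set Src := {x | IsSourceIn S₁ x} with hSrc
  set Snk := {x | IsSinkIn S₂ x} with hSnk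
  set T : Set V := ⋃ s ∈ Src, ⋃ t ∈ Snk, ⋃ r : Quiver.Path s t, Aux.pathVerts r with hT
  have hTfin : T.Finite := by
    refine h₁.1.biUnion fun s _ => h₂.1.biUnion fun t _ => ?_
    have := hif s t
    exact Set.finite_iUnion fun r => Aux.pathVerts_finite r
  have hsub : {e : (x : V) × (y : V) × (x ⟶ y) | e.1 ∈ S₁ ∧ e.2.1 ∈ S₂} ⊆
      ⋃ x ∈ T, ⋃ y ∈ T, Set.range (fun f : x ⟶ y => (⟨x, y, f⟩ : (x : V) × (y : V) × (x ⟶ y))) := by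
    rintro ⟨x, y, f⟩ ⟨hx, hy⟩
    obtain ⟨s, hs, hsx⟩ := h₁.2 x hx
    obtain ⟨t, ht, hyt⟩ := h₂.2 y hy
    obtain ⟨p⟩ := Aux.reachIn_path hsx
    obtain ⟨q⟩ := Aux.reachIn_path hyt
    have hxT : x ∈ T := by
      refine Set.mem_biUnion hs (Set.mem_biUnion ht (Set.mem_iUnion.2 ⟨(p.cons f).comp q, ?_⟩))
      exact Aux.pathVerts_comp_subset (p.cons f) q
        (by rw [Aux.pathVerts_cons]; exact Set.subset_insert _ _ (Aux.mem_pathVerts_self p))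
    have hyT : y ∈ T := by
      refine Set.mem_biUnion hs (Set.mem_biUnion ht (Set.mem_iUnion.2 ⟨(p.cons f).comp q, ?_⟩))
      exact Aux.pathVerts_comp_subset (p.cons f) q (Aux.mem_pathVerts_self (p.cons f))
    exact Set.mem_biUnion hxT (Set.mem_biUnion hyT ⟨f, rfl⟩)
  refine Set.Finite.subset ?_ hsub
  refine hTfin.biUnion fun x _ => hTfin.biUnion fun y _ => ?_
  have := hlf.1 x y
  exact Set.finite_range _
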